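/- Every assignment satisfies the constraint X ≤_m Y (i.e., the constraint is entailed) if and only if ceiling(X) ≤_m floor(Y). -/
import Mathlib


namespace MsetPaper

/-- The maximum element of a multiset of naturals (`0` for the empty multiset). -/
def mmax (s : Multiset ℕ) : ℕ := s.sup

/-- The strict multiset order `x <ₘ y` of the paper: either `x` is empty and `y` is not,
or both are nonempty and either `max x < max y`, or the maxima agree and the multisets
with one occurrence of the maximum removed are again strictly ordered. -/
inductive MLt : Multiset ℕ → Multiset ℕ → Prop
  | empty {y : Multiset ℕ} : y ≠ 0 → MLt 0 y
  | maxLt {x y : Multiset ℕ} : x ≠ 0 → y ≠ 0 → mmax x < mmax y → MLt x y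
  | maxEq {x y : Multiset ℕ} : x ≠ 0 → y ≠ 0 → mmax x = mmax y →
      MLt (x.erase (mmax x)) (y.erase (mmax y)) → MLt x y

/-- The (non-strict) multiset order `x ≤ₘ y`. -/
def MLe (x y : Multiset ℕ) : Prop := MLt x y ∨ x = y

/-- The multiset of values taken by a vector. -/
def msetOf {n : ℕ} (x : Fin n → ℕ) : Multiset ℕ := (List.ofFn x : List ℕ)

lemma mmax_mem {s : Multiset ℕ} (hs : s ≠ 0) : mmax s ∈ s := by
  induction s using Multiset.induction_on with
  | empty => simp at hs
  | cons a t ih =>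
    by_cases ht : t = 0
    · subst ht; simp [mmax]
    · have hc : mmax (a ::ₘ t) = a ⊔ mmax t := by simp [mmax]
      rcases le_total a (mmax t) with h | h
      · rw [hc, sup_eq_right.mpr h]; exact Multiset.mem_cons_of_mem (ih ht)
      · rw [hc, sup_eq_left.mpr h]; exact Multiset.mem_cons_self a t

lemma le_mmax {s : Multiset ℕ} {a : ℕ} (h : a ∈ s) : a ≤ mmax s := Multiset.le_sup h

lemma rel_erase {r : ℕ → ℕ → Prop} {s t : Multiset ℕ} (h : Multiset.Rel r s t) {a : ℕ}
    (ha : a ∈ s) : ∃ b ∈ t, r a b ∧ Multiset.Rel r (s.erase a) (t.erase b) := by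
  rw [← Multiset.cons_erase ha, Multiset.rel_cons_left] at h
  obtain ⟨b, t', hab, hrel, rfl⟩ := h
  exact ⟨b, Multiset.mem_cons_self _ _, hab, by simpa using hrel⟩

lemma MLt_trans {x y z : Multiset ℕ} (h1 : MLt x y) (h2 : MLt y z) : MLt x z := by
  induction h1 generalizing z with
  | empty hy =>
    cases h2 with
    | empty hz => exact absurd rfl hy
    | maxLt _ hz _ => exact MLt.empty hz
    | maxEq _ hz _ _ => exact MLt.empty hz
  | maxLt hx hy hm =>
    cases h2 with
    | empty _ => exact absurd rfl hy
    | maxLt _ hz hm' => exact MLt.maxLt hx hz (hm.trans hm')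
    | maxEq _ hz he _ => exact MLt.maxLt hx hz (hm.trans_eq he)
  | maxEq hx hy he _ ih =>
    cases h2 with
    | empty _ => exact absurd rfl hy
    | maxLt _ hz hm' => exact MLt.maxLt hx hz (he ▸ hm')
    | maxEq _ hz he' h' => exact MLt.maxEq hx hz (he.trans he') (ih h')

lemma MLe_trans {x y z : Multiset ℕ} (h1 : MLe x y) (h2 : MLe y z) : MLe x z := by
  rcases h1 with h1 | rfl
  · rcases h2 with h2 | rfl
    · exact Or.inl (MLt_trans h1 h2)
    · exact Or.inl h1
  · exact h2

lemma rel_le_MLe : ∀ {s t : Multiset ℕ}, Multiset.Rel (· ≤ ·) s t → MLe s t := by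
  intro s
  induction s using Multiset.strongInductionOn with
  | ih s ih =>
    intro t h
    by_cases hs : s = 0
    · subst hs
      rw [Multiset.rel_zero_left] at h
      exact Or.inr h.symm
    · obtain ⟨b, hb, hab, hrel⟩ := rel_erase h (mmax_mem hs)
      have ht : t ≠ 0 := fun h0 => by simp [h0] at hb
      have hle : mmax s ≤ mmax t := hab.trans (le_mmax hb)
      rcases lt_or_eq_of_le hle with hlt | heq
      · exact Or.inl (MLt.maxLt hs ht hlt)
      · have hb' : b = mmax t := le_antisymm (le_mmax hb) (heq ▸ hab)
        subst hb'
        have hsub : s.erase (mmax s) < s := Multiset.erase_lt.mpr (mmax_mem hs)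
        rcases ih _ hsub hrel with hlt' | heqe
        · exact Or.inl (MLt.maxEq hs ht heq (heq ▸ hlt'))
        · refine Or.inr ?_
          have : s = mmax s ::ₘ s.erase (mmax s) := (Multiset.cons_erase (mmax_mem hs)).symm
          rw [this, heqe, heq, Multiset.cons_erase hb]

lemma rel_of_pointwise {n : ℕ} {f g : Fin n → ℕ} (h : ∀ i, f i ≤ g i) :
    Multiset.Rel (· ≤ ·) (msetOf f) (msetOf g) := by
  induction n with
  | zero => simp [msetOf, Multiset.rel_zero_left, List.ofFn_zero]
  | succ m ih =>
    have : (msetOf f : Multiset ℕ) = f 0 ::ₘ msetOf (fun i => f i.succ) := by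
      simp [msetOf, List.ofFn_succ]
    rw [this]
    have hg : (msetOf g : Multiset ℕ) = g 0 ::ₘ msetOf (fun i => g i.succ) := by
      simp [msetOf, List.ofFn_succ]
    rw [hg]
    exact Multiset.Rel.cons (h 0) (ih (fun i => h i.succ))

/-- The constraint `X ≤ₘ Y` is entailed iff `ceiling(X) ≤ₘ floor(Y)`. -/
theorem stmt3 (n : ℕ) (hn : 1 ≤ n) (DX DY : Fin n → Finset ℕ)
    (hDX : ∀ i, (DX i).Nonempty) (hDY : ∀ i, (DY i).Nonempty) :
    (∀ x y : Fin n → ℕ, (∀ i, x i ∈ DX i) → (∀ i, y i ∈ DY i) →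
        MLe (msetOf x) (msetOf y)) ↔
      MLe (msetOf fun i => (DX i).max' (hDX i)) (msetOf fun i => (DY i).min' (hDY i)) := by
  constructor
  · intro h
    exact h _ _ (fun i => (DX i).max'_mem (hDX i)) (fun i => (DY i).min'_mem (hDY i))
  · intro h x y hx hy
    have h1 : MLe (msetOf x) (msetOf fun i => (DX i).max' (hDX i)) :=
      rel_le_MLe (rel_of_pointwise fun i => Finset.le_max' _ _ (hx i))
    have h2 : MLe (msetOf fun i => (DY i).min' (hDY i)) (msetOf y) :=
      rel_le_MLe (rel_of_pointwise fun i => Finset.min'_le _ _ (hy i))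
    exact MLe_trans h1 (MLe_trans h h2)

end MsetPaper
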